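/- If φ is uniformly distributed on [-π, π] and d(0) < l_max < d(π) where d(φ)² = R_LEO² + R_GEO² - 2R_LEO R_GEO(sin θ sin Θ cos φ + cos θ cos Θ) with R_LEO, R_GEO > 0 and θ, Θ ∈ (0,π), then P[d(φ) ≤ l_max] = (1/π) · arccos((R_LEO² + R_GEO² - l_max²)/(2R_LEO R_GEO sin θ sin Θ) - cos θ cos Θ / (sin θ sin Θ)). -/

import Mathlib

/-!
The angle `φ` enters `d φ` only through `cos φ`, with a negative coefficient, so `d φ ≤ l_max`
says `c ≤ cos φ` for an explicit constant `c ≤ 1`. On `[-π, π]` this is the interval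
`|φ| ≤ arccos c`, of length `2 arccos c`.
-/

open Real MeasureTheory Set

namespace Real

lemma le_cos_iff_le_arccos {c x : ℝ} (hc : c ≤ 1) (hx₀ : 0 ≤ x) (hxπ : x ≤ π) :
    c ≤ cos x ↔ x ≤ arccos c := by
  constructor
  · intro h
    simpa only [arccos_cos hx₀ hxπ] using arccos_le_arccos h
  · intro h
    rcases le_or_gt c (-1) with hc' | hc'
    · exact hc'.trans (neg_one_le_cos x)
    · simpa only [cos_arccos hc'.le hc] using cos_le_cos_of_nonneg_of_le_pi hx₀ (arccos_le_pi c) h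

lemma setOf_mem_Icc_and_le_cos {c : ℝ} (hc : c ≤ 1) :
    {φ | φ ∈ Icc (-π) π ∧ c ≤ cos φ} = Icc (-arccos c) (arccos c) := by
  ext φ
  simp only [mem_ofPred_eq, mem_Icc, ← abs_le, ← cos_abs φ]
  constructor
  · rintro ⟨hφπ, hcos⟩
    exact (le_cos_iff_le_arccos hc (abs_nonneg φ) hφπ).1 hcos
  · intro hφ
    have hφπ := hφ.trans (arccos_le_pi c)
    exact ⟨hφπ, (le_cos_iff_le_arccos hc (abs_nonneg φ) hφπ).2 hφ⟩

lemma volume_setOf_mem_Icc_and_le_cos {c : ℝ} (hc : c ≤ 1) :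
    (volume {φ | φ ∈ Icc (-π) π ∧ c ≤ cos φ}).toReal = 2 * arccos c := by
  rw [setOf_mem_Icc_and_le_cos hc, volume_Icc, ENNReal.toReal_ofReal] <;>
    linarith [arccos_nonneg c]

lemma sqrt_sub_mul_cos_le_iff {a b l φ : ℝ} (hb : 0 < b) (hl : 0 ≤ l) :
    √(a - b * cos φ) ≤ l ↔ (a - l ^ 2) / b ≤ cos φ := by
  rw [sqrt_le_iff, div_le_iff₀ hb]
  constructor
  · rintro ⟨-, h⟩
    linarith
  · intro h
    exact ⟨hl, by linarith⟩

end Real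

theorem stmt6_general (RLEO RGEO θ Θ lmax : ℝ) (hL : 0 < RLEO) (hG : 0 < RGEO)
    (hθ : θ ∈ Set.Ioo (0 : ℝ) π) (hΘ : Θ ∈ Set.Ioo (0 : ℝ) π)
    (d : ℝ → ℝ)
    (hd : ∀ φ, d φ = Real.sqrt (RLEO ^ 2 + RGEO ^ 2 -
        2 * RLEO * RGEO * (Real.sin θ * Real.sin Θ * Real.cos φ + Real.cos θ * Real.cos Θ)))
    (h0 : d 0 < lmax) :
    (volume {φ : ℝ | φ ∈ Set.Icc (-π) π ∧ d φ ≤ lmax}).toReal / (2 * π)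
      = (1 / π) * Real.arccos
          ((RLEO ^ 2 + RGEO ^ 2 - lmax ^ 2) / (2 * RLEO * RGEO * Real.sin θ * Real.sin Θ)
            - Real.cos θ * Real.cos Θ / (Real.sin θ * Real.sin Θ)) := by
  have hsinθ : 0 < sin θ := sin_pos_of_pos_of_lt_pi hθ.1 hθ.2
  have hsinΘ : 0 < sin Θ := sin_pos_of_pos_of_lt_pi hΘ.1 hΘ.2
  set a := RLEO ^ 2 + RGEO ^ 2 - 2 * RLEO * RGEO * (cos θ * cos Θ)
  set b := 2 * RLEO * RGEO * sin θ * sin Θ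
  have hb : 0 < b := by positivity
  have hd' : ∀ φ, d φ = √(a - b * cos φ) := fun φ ↦ by
    rw [hd]
    congr 1
    ring
  have hl : 0 ≤ lmax := (hd' 0 ▸ sqrt_nonneg _).trans h0.le
  have hiff : ∀ φ, d φ ≤ lmax ↔ (a - lmax ^ 2) / b ≤ cos φ := fun φ ↦ by
    rw [hd', sqrt_sub_mul_cos_le_iff hb hl]
  have hc : (a - lmax ^ 2) / b ≤ 1 := by simpa using (hiff 0).1 h0.le
  have harg : (RLEO ^ 2 + RGEO ^ 2 - lmax ^ 2) / b - cos θ * cos Θ / (sin θ * sin Θ)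
      = (a - lmax ^ 2) / b := by
    field_simp
    ring
  simp only [hiff, harg, volume_setOf_mem_Icc_and_le_cos hc]
  field_simp

/-- If `φ` is uniform on `[-π, π]` and `d(0) < l_max < d(π)` where
`d(φ) = sqrt(R_LEO² + R_GEO² - 2R_LEO R_GEO(sin θ sin Θ cos φ + cos θ cos Θ))` with
`R_LEO, R_GEO > 0` and `θ, Θ ∈ (0, π)`, then
`P[d(φ) ≤ l_max] = (1/π) arccos((R_LEO² + R_GEO² - l_max²)/(2R_LEO R_GEO sin θ sin Θ)
  - cos θ cos Θ / (sin θ sin Θ))`. -/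
theorem stmt6 (RLEO RGEO θ Θ lmax : ℝ) (hL : 0 < RLEO) (hG : 0 < RGEO)
    (hθ : θ ∈ Set.Ioo (0 : ℝ) π) (hΘ : Θ ∈ Set.Ioo (0 : ℝ) π)
    (d : ℝ → ℝ)
    (hd : ∀ φ, d φ = Real.sqrt (RLEO ^ 2 + RGEO ^ 2 -
        2 * RLEO * RGEO * (Real.sin θ * Real.sin Θ * Real.cos φ + Real.cos θ * Real.cos Θ)))
    (h0 : d 0 < lmax) (hπ : lmax < d π) :
    (volume {φ : ℝ | φ ∈ Set.Icc (-π) π ∧ d φ ≤ lmax}).toReal / (2 * π)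
      = (1 / π) * Real.arccos
          ((RLEO ^ 2 + RGEO ^ 2 - lmax ^ 2) / (2 * RLEO * RGEO * Real.sin θ * Real.sin Θ)
            - Real.cos θ * Real.cos Θ / (Real.sin θ * Real.sin Θ)) :=
  stmt6_general RLEO RGEO θ Θ lmax hL hG hθ hΘ d hd h0
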